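/- arXiv:1506.03594 — 3 statements merged into one kernel-verified Lean document; each statement's English description precedes it below -/
import Mathlib

section
/- Suppose a group G acts strongly transitively on a thick spherical building Δ. Let Σ be an apartment of Δ containing a chamber c, let B be the stabilizer of c in G, and let T be the pointwise stabilizer of Σ in G. For each pair τ = (a, ā) of opposite panels of Σ, let B_τ be the subgroup of B fixing both a and ā. Then B is generated by T together with the subgroups B_τ, where τ ranges over all pairs of opposite panels in Σ. -/
/-!
Induct on the number of chambers of `A` moved by `b ∈ B`, writing `A = range f` with `f 1 = c`.
If `b` moves a chamber of `A`, pick `v`, `i` with `b` fixing `x = f v` but moving `f (v sᵢ)`, and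
put `y = b • f (v sᵢ)`. Then `y` is opposite `f (v sᵢ w₀)`, and the apartment `A'` spanned by
these two chambers contains every chamber of `A` fixed by `b`. Strong transitivity gives `h`
carrying `A'` onto `A` and fixing `x`; as chambers of `A` are determined by their Weyl distance
from `x`, `h` fixes `A ∩ A'` pointwise, in particular `c`, `x` and `f (v sᵢ w₀)`, so it stabilizes the panel of type `i` at `x` and the
opposite panel at `f (v sᵢ w₀)`. As `h • y = f (v sᵢ)`, `h * b` fixes strictly more of `A`.

The Coxeter-group input is `ℓ v + ℓ (v⁻¹ w₀) = ℓ w₀`, which comes from Tits' sign cocycle on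
reflections.
-/

/-- A building in the `W`-metric (chamber system) sense: a type `C` of chambers with a
Weyl-distance function `δ : C → C → W` satisfying the standard axioms. -/
structure IsWBuilding {I W : Type*} [Group W] {M : CoxeterMatrix I}
    (cs : CoxeterSystem M W) {C : Type*} (δ : C → C → W) : Prop where
  eq_one_iff : ∀ c d : C, δ c d = 1 ↔ c = d
  symm : ∀ c d : C, δ d c = (δ c d)⁻¹
  step : ∀ c d e : C, ∀ i : I, δ d e = cs.simple i →
    δ c e = δ c d * cs.simple i ∨ δ c e = δ c d
  step_len : ∀ c d e : C, ∀ i : I, δ d e = cs.simple i →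
    cs.length (δ c d * cs.simple i) = cs.length (δ c d) + 1 →
    δ c e = δ c d * cs.simple i
  exists_step : ∀ c d : C, ∀ i : I, ∃ e : C, δ d e = cs.simple i ∧
    δ c e = δ c d * cs.simple i

/-- An apartment: the image of a `δ`-isometric copy of the Coxeter group `W`. -/
def IsApartmentOf {I W : Type*} [Group W] {M : CoxeterMatrix I}
    (cs : CoxeterSystem M W) {C : Type*} (δ : C → C → W) (A : Set C) : Prop :=
  ∃ f : W → C, Function.Injective f ∧ Set.range f = A ∧
    ∀ u v : W, δ (f u) (f v) = u⁻¹ * v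

/-- Thickness: every panel contains at least three chambers. -/
def IsThick {I W : Type*} [Group W] {M : CoxeterMatrix I}
    (cs : CoxeterSystem M W) {C : Type*} (δ : C → C → W) : Prop :=
  ∀ c : C, ∀ i : I, ∃ d e : C, δ c d = cs.simple i ∧ δ c e = cs.simple i ∧ d ≠ e

/-- The panel of a chamber `c` in the direction of the generator `i`. -/
def panelOf {I W : Type*} [Group W] {M : CoxeterMatrix I}
    (cs : CoxeterSystem M W) {C : Type*} (δ : C → C → W) (c : C) (i : I) : Set C :=
  {d | δ c d = 1 ∨ δ c d = cs.simple i}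

/-- `P` is a panel of the building. -/
def IsPanel {I W : Type*} [Group W] {M : CoxeterMatrix I}
    (cs : CoxeterSystem M W) {C : Type*} (δ : C → C → W) (P : Set C) : Prop :=
  ∃ c i, P = panelOf cs δ c i

/-- A pair of opposite panels of the apartment `A` (with respect to the longest
element `w₀`): both panels meet `A` and they contain opposite chambers of `A`. -/
def OppPanelsIn {I W : Type*} [Group W] {M : CoxeterMatrix I}
    (cs : CoxeterSystem M W) {C : Type*} (δ : C → C → W) (w₀ : W)
    (A P Q : Set C) : Prop :=
  IsPanel cs δ P ∧ IsPanel cs δ Q ∧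
    ∃ c ∈ P ∩ A, ∃ d ∈ Q ∩ A, δ c d = w₀

/-- A `G`-action by (type-preserving) automorphisms of the building. -/
def IsIsometricAction {I W : Type*} [Group W] {M : CoxeterMatrix I}
    (cs : CoxeterSystem M W) {C : Type*} (δ : C → C → W)
    (G : Type*) [Group G] [MulAction G C] : Prop :=
  ∀ g : G, ∀ c d : C, δ (g • c) (g • d) = δ c d

/-- Strong transitivity: `G` is transitive on pairs (apartment, chamber in it). -/
def IsStronglyTransitive {I W : Type*} [Group W] {M : CoxeterMatrix I}
    (cs : CoxeterSystem M W) {C : Type*} (δ : C → C → W)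
    (G : Type*) [Group G] [MulAction G C] : Prop :=
  ∀ A A' : Set C, IsApartmentOf cs δ A → IsApartmentOf cs δ A' →
    ∀ c ∈ A, ∀ c' ∈ A', ∃ g : G, (fun x => g • x) '' A = A' ∧ g • c = c'

theorem Subgroup.mem_closure_of_exists_mul_ssubset {G α : Type*} [Group G] [Finite α]
    {S : Set G} {P : G → Prop} (F : G → Set α) (base : ∀ b, P b → F b = Set.univ → b ∈ S)
    (step : ∀ b, P b → F b ≠ Set.univ → ∃ h ∈ S, P (h * b) ∧ F b ⊂ F (h * b)) {b : G}
    (hb : P b) : b ∈ Subgroup.closure S := by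
  induction hn : (F b)ᶜ.ncard using Nat.strong_induction_on generalizing b with
  | _ n ih =>
    by_cases hF : F b = Set.univ
    · exact Subgroup.subset_closure (base b hb hF)
    obtain ⟨h, hS, hhb, hlt⟩ := step b hb hF
    have hhb' := ih _ (hn ▸ Set.ncard_lt_ncard (compl_lt_compl_iff_lt.2 hlt) (Set.toFinite _))
      hhb rfl
    simpa using Subgroup.mul_mem _ (Subgroup.inv_mem _ (Subgroup.subset_closure hS)) hhb'

section ConjArrow

variable {G M : Type*} [Group G] [Mul M]

def conjArrow : G →* MulAut (G → M) where
  toFun g :=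
    { toFun := fun F x => F (g⁻¹ * x * g)
      invFun := fun F x => F (g * x * g⁻¹)
      left_inv := fun F => by ext x; simp [mul_assoc]
      right_inv := fun F => by ext x; simp [mul_assoc]
      map_mul' := fun _ _ => rfl }
  map_one' := by ext; simp
  map_mul' := fun _ _ => by ext; simp [mul_assoc]

theorem conjArrow_apply (g : G) (F : G → M) (x : G) : conjArrow g F x = F (g⁻¹ * x * g) := rfl

end ConjArrow

theorem SemidirectProduct.pow_left {N G : Type*} [CommGroup N] [Group G] {φ : G →* MulAut N}
    (p : N ⋊[φ] G) (n : ℕ) : (p ^ n).left = ∏ r ∈ Finset.range n, φ (p.right ^ r) p.left := by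
  induction n with
  | zero => rfl
  | succ n ih =>
    have hright : (p ^ n).right = p.right ^ n := map_pow rightHom p n
    rw [pow_succ, mul_left, ih, Finset.prod_range_succ, hright]

theorem Function.Periodic.prod_range_pairs_eq_one {g : ℕ → ℤˣ} {m : ℕ}
    (hg : Function.Periodic g m) : ∏ r ∈ Finset.range m, g (2 * r) * g (2 * r + 1) = 1 := by
  have h2m : ∀ n, ∏ r ∈ Finset.range n, g (2 * r) * g (2 * r + 1) =
      ∏ k ∈ Finset.range (2 * n), g k := by
    intro n
    induction n with
    | zero => simp
    | succ n ih =>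
      rw [Finset.prod_range_succ, ih, Nat.mul_succ, Finset.prod_range_succ,
        Finset.prod_range_succ, mul_assoc]
  have hg' : ∀ k, g (m + k) = g k := fun k => by rw [add_comm]; exact hg k
  rw [h2m, two_mul, Finset.prod_range_add]
  simp only [hg', Int.units_mul_self]

section Dihedral

variable {G : Type*} [Group G] {a b : G}

theorem mul_inv_pow_eq_pow_mul_of_involutive (ha : a * a = 1) (hb : b * b = 1) (r : ℕ) :
    a * ((a * b) ^ r)⁻¹ = (a * b) ^ r * a := by
  have ha' : a⁻¹ = a := inv_eq_of_mul_eq_one_right ha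
  have hconj : a * (a * b)⁻¹ * a⁻¹ = a * b := by
    simp [mul_inv_rev, ha', inv_eq_of_mul_eq_one_right hb, mul_assoc, ha]
  calc a * ((a * b) ^ r)⁻¹ = (a * (a * b)⁻¹ * a⁻¹) ^ r * a := by
        rw [conj_pow, inv_mul_cancel_right, inv_pow]
    _ = (a * b) ^ r * a := by rw [hconj]

theorem conj_pow_eq_pow_two_mul_of_involutive (ha : a * a = 1) (hb : b * b = 1) (r : ℕ) :
    (a * b) ^ r * a * ((a * b) ^ r)⁻¹ = (a * b) ^ (2 * r) * a := by
  rw [mul_assoc, mul_inv_pow_eq_pow_mul_of_involutive ha hb, two_mul, pow_add, mul_assoc]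

theorem conj_pow_mul_mul_eq_pow_two_mul_succ_of_involutive (ha : a * a = 1) (hb : b * b = 1)
    (r : ℕ) : (a * b) ^ r * (a * b * a) * ((a * b) ^ r)⁻¹ = (a * b) ^ (2 * r + 1) * a := by
  rw [mul_assoc, mul_assoc, mul_inv_pow_eq_pow_mul_of_involutive ha hb, ← mul_assoc, ← mul_assoc,
    ← pow_succ, ← pow_add, show r + 1 + r = 2 * r + 1 by omega]

end Dihedral

theorem inv_mul_mul_eq_iff_eq_mul_mul_inv {G : Type*} [Group G] {u x z : G} :
    u⁻¹ * x * u = z ↔ x = u * z * u⁻¹ := by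
  constructor <;> rintro rfl <;> group

namespace CoxeterSystem

variable {B W : Type*} [Group W] {M : CoxeterMatrix B} (cs : CoxeterSystem M W)

theorem induction_reduced {p : W → Prop} (one : p 1)
    (mul_simple : ∀ w i, cs.length (w * cs.simple i) = cs.length w + 1 → p w →
      p (w * cs.simple i)) (w : W) : p w := by
  induction hn : cs.length w using Nat.strong_induction_on generalizing w with
  | _ n ih =>
    rcases eq_or_ne w 1 with rfl | hw
    · exact one
    obtain ⟨i, hi⟩ := cs.exists_rightDescent_of_ne_one hw
    rw [cs.isRightDescent_iff] at hi
    have h := mul_simple (w * cs.simple i) i (by rw [cs.simple_mul_simple_cancel_right]; omega)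
      (ih _ (by omega) _ rfl)
    rwa [cs.simple_mul_simple_cancel_right] at h

theorem length_mul_of_length_mul_mul_simple {x y : W} {i : B}
    (hy : cs.length (y * cs.simple i) = cs.length y + 1)
    (h : cs.length (x * (y * cs.simple i)) = cs.length x + cs.length (y * cs.simple i)) :
    cs.length (x * y) = cs.length x + cs.length y ∧
      cs.length (x * y * cs.simple i) = cs.length (x * y) + 1 := by
  have h₁ := cs.length_mul_le x y
  have h₂ := cs.length_mul_le (x * y) (cs.simple i)
  rw [cs.length_simple] at h₂
  rw [mul_assoc] at h₂ ⊢
  omega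

theorem exists_mul_simple_not_mem {V : Set W} (h1 : 1 ∈ V) (hV : V ≠ Set.univ) :
    ∃ v ∈ V, ∃ i, v * cs.simple i ∉ V := by
  by_contra! h
  exact hV (Set.eq_univ_of_forall fun w => cs.simple_induction_right w h1 fun w i hw => h w hw i)

/- Tits' cocycle: `w ↦ (η w, w)` in `(W → ℤˣ) ⋊ W`, where `η w t = -1` iff the reflection `t`
separates `1` from `w`. It is defined on the generators, where `η (s i)` is `-1` only at `s i`. -/
open Classical in
noncomputable def reflCocycleGen (i : B) : (W → ℤˣ) ⋊[conjArrow] W :=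
  ⟨fun x => if x = cs.simple i then -1 else 1, cs.simple i⟩

open Classical in
theorem isLiftable_reflCocycleGen : M.IsLiftable cs.reflCocycleGen := by
  intro i j
  have ha := cs.simple_mul_simple_self i
  have hb := cs.simple_mul_simple_self j
  refine SemidirectProduct.ext ?_ ((map_pow SemidirectProduct.rightHom _ _).trans
    (cs.simple_mul_simple_pow i j))
  funext x
  rw [SemidirectProduct.pow_left, Finset.prod_apply]
  -- With `ρ = sᵢ sⱼ`, the `r`-th factor tests `x` against `ρ^(2r) sᵢ` and `ρ^(2r+1) sᵢ`.
  let g : ℕ → ℤˣ := fun k =>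
    if x = (cs.simple i * cs.simple j) ^ k * cs.simple i then -1 else 1
  refine Eq.trans (Finset.prod_congr rfl fun r _ => ?_)
    (Function.Periodic.prod_range_pairs_eq_one (g := g) fun k => by
      simp only [g, pow_add, cs.simple_mul_simple_pow, mul_one])
  simp only [g, conjArrow_apply, reflCocycleGen, SemidirectProduct.mul_left, Pi.mul_apply,
    SemidirectProduct.mul_right, inv_mul_mul_eq_iff_eq_mul_mul_inv]
  simp only [cs.inv_simple, conj_pow_eq_pow_two_mul_of_involutive ha hb,
    conj_pow_mul_mul_eq_pow_two_mul_succ_of_involutive ha hb]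

noncomputable def reflCocycle : W →* (W → ℤˣ) ⋊[conjArrow] W :=
  cs.lift ⟨cs.reflCocycleGen, cs.isLiftable_reflCocycleGen⟩

theorem reflCocycle_right (w : W) : (cs.reflCocycle w).right = w := by
  have : SemidirectProduct.rightHom.comp cs.reflCocycle = MonoidHom.id W :=
    cs.ext_simple fun i => by simp [reflCocycle, reflCocycleGen]
  exact DFunLike.congr_fun this w

noncomputable def inversionSign (w t : W) : ℤˣ := (cs.reflCocycle w).left t

theorem inversionSign_mul (u v x : W) :
    cs.inversionSign (u * v) x = cs.inversionSign u x * cs.inversionSign v (u⁻¹ * x * u) := by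
  simp only [inversionSign, map_mul, SemidirectProduct.mul_left, reflCocycle_right]
  rfl

open Classical in
theorem inversionSign_simple (i : B) (x : W) :
    cs.inversionSign (cs.simple i) x = if x = cs.simple i then -1 else 1 := by
  simp only [inversionSign, reflCocycle, cs.lift_apply_simple]
  rfl

theorem inversionSign_one (x : W) : cs.inversionSign 1 x = 1 := by
  simp only [inversionSign, map_one]
  rfl

theorem inversionSign_inv (w x : W) :
    cs.inversionSign w⁻¹ x = cs.inversionSign w (w * x * w⁻¹) := by
  have h := cs.inversionSign_mul w w⁻¹ (w * x * w⁻¹)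
  rw [mul_inv_cancel, inversionSign_one, show w⁻¹ * (w * x * w⁻¹) * w = x by group] at h
  rw [← Int.units_inv_eq_self (cs.inversionSign w _), eq_inv_iff_mul_eq_one, mul_comm, h]

theorem inversionSign_self {t : W} (ht : cs.IsReflection t) : cs.inversionSign t t = -1 := by
  obtain ⟨u, i, rfl⟩ := ht
  rw [mul_assoc, inversionSign_mul, inversionSign_mul, inversionSign_inv, inversionSign_simple,
    if_pos (by group), show u * ((cs.simple i)⁻¹ * (u⁻¹ * (u * (cs.simple i * u⁻¹)) * u) * cs.simple i) * u⁻¹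
    = u * (cs.simple i * u⁻¹) by group, mul_left_comm, Int.units_mul_self, mul_one]

theorem length_mul_lt_of_inversionSign_eq_neg_one {w t : W} (h : cs.inversionSign w t = -1) :
    cs.length (t * w) < cs.length w := by
  induction w using cs.induction_reduced generalizing t with
  | one => exact absurd (h.symm.trans (cs.inversionSign_one t)) (by decide)
  | mul_simple w i hlen ih =>
    rw [inversionSign_mul, inversionSign_simple] at h
    by_cases ht : w⁻¹ * t * w = cs.simple i
    · rw [inv_mul_mul_eq_iff_eq_mul_mul_inv] at ht
      rw [ht, hlen, show w * cs.simple i * w⁻¹ * (w * cs.simple i) = w by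
        simp [mul_assoc, cs.simple_mul_simple_self]]
      omega
    · rw [if_neg ht, mul_one] at h
      have := cs.length_mul_le (t * w) (cs.simple i)
      rw [cs.length_simple, mul_assoc] at this
      linarith [ih h]

theorem inversionSign_eq_neg_one_iff {w t : W} (ht : cs.IsReflection t) :
    cs.inversionSign w t = -1 ↔ cs.length (t * w) < cs.length w := by
  refine ⟨cs.length_mul_lt_of_inversionSign_eq_neg_one, fun hlt => ?_⟩
  rcases Int.units_eq_one_or (cs.inversionSign w t) with h | h
  · have h' : cs.inversionSign (t * w) t = -1 := by
      rw [inversionSign_mul, inversionSign_self cs ht, inv_mul_cancel, one_mul, h, mul_one]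
    have := cs.length_mul_lt_of_inversionSign_eq_neg_one h'
    rw [← mul_assoc, ht.mul_self, one_mul] at this
    omega
  · exact h

section Longest

variable {cs} {w₀ : W}

theorem inversionSign_longest (hw₀ : ∀ w, cs.length w ≤ cs.length w₀) {t : W}
    (ht : cs.IsReflection t) : cs.inversionSign w₀ t = -1 :=
  (cs.inversionSign_eq_neg_one_iff ht).2 (lt_of_le_of_ne (hw₀ _) (ht.length_mul_right_ne w₀))

theorem length_add_length_inv_mul_longest (hw₀ : ∀ w, cs.length w ≤ cs.length w₀) (v : W) :
    cs.length v + cs.length (v⁻¹ * w₀) = cs.length w₀ := by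
  induction v using cs.induction_reduced with
  | one => simp
  | mul_simple v i hlen ih =>
    have ht : cs.IsReflection (v * cs.simple i * v⁻¹) := (cs.isReflection_simple i).conj v
    have hv : cs.inversionSign v (v * cs.simple i * v⁻¹) = 1 := by
      refine (Int.units_eq_one_or _).resolve_right fun h => ?_
      have := (cs.inversionSign_eq_neg_one_iff ht).1 h
      rw [inv_mul_cancel_right] at this
      omega
    have hdesc : cs.inversionSign (v⁻¹ * w₀) (cs.simple i) = -1 := by
      rw [inversionSign_mul, inversionSign_inv, inv_inv, inversionSign_longest hw₀ ht, hv, one_mul]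
    have := (cs.inversionSign_eq_neg_one_iff (cs.isReflection_simple i)).1 hdesc
    rw [mul_inv_rev, cs.inv_simple, mul_assoc, hlen]
    rcases cs.length_simple_mul (v⁻¹ * w₀) i with h | h <;> omega

theorem length_simple_mul_longest (hw₀ : ∀ w, cs.length w ≤ cs.length w₀) (i : B) :
    cs.length (cs.simple i * w₀) + 1 = cs.length w₀ :=
  (cs.length_simple_mul w₀ i).resolve_left fun h => by have := hw₀ (cs.simple i * w₀); omega

theorem exists_inv_mul_simple_mul_longest_eq (hw₀ : ∀ w, cs.length w ≤ cs.length w₀) (i : B) :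
    ∃ j, w₀⁻¹ * cs.simple i * w₀ = cs.simple j := by
  refine cs.length_eq_one_iff.1 ?_
  have h := length_add_length_inv_mul_longest hw₀ (cs.simple i * w₀)
  rw [mul_inv_rev, cs.inv_simple] at h
  have := length_simple_mul_longest hw₀ i
  omega

end Longest

end CoxeterSystem

section Apartments

variable {B W Ch : Type*} [Group W] {M : CoxeterMatrix B} {cs : CoxeterSystem M W}
  {δ : Ch → Ch → W}

theorem IsApartmentOf.eq_of_delta_eq {A : Set Ch} (hA : IsApartmentOf cs δ A) {x z z' : Ch}
    (hx : x ∈ A) (hz : z ∈ A) (hz' : z' ∈ A) (h : δ x z = δ x z') : z = z' := by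
  obtain ⟨f, -, rfl, hf⟩ := hA
  obtain ⟨u, rfl⟩ := hx
  obtain ⟨v, rfl⟩ := hz
  obtain ⟨v', rfl⟩ := hz'
  rw [hf, hf, mul_left_cancel_iff] at h
  rw [h]

theorem IsApartmentOf.exists_chart {A : Set Ch} (hA : IsApartmentOf cs δ A) {c : Ch}
    (hc : c ∈ A) :
    ∃ f : W → Ch, Set.range f = A ∧ (∀ u v, δ (f u) (f v) = u⁻¹ * v) ∧ f 1 = c := by
  obtain ⟨f, -, rfl, hf⟩ := hA
  obtain ⟨u₀, rfl⟩ := hc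
  exact ⟨fun w => f (u₀ * w), (mul_left_surjective u₀).range_comp f,
    fun u v => by rw [hf]; group, congrArg f (mul_one u₀)⟩

theorem IsIsometricAction.image_panelOf {G : Type*} [Group G] [MulAction G Ch]
    (hact : IsIsometricAction cs δ G) (g : G) (p : Ch) (i : B) :
    (fun z => g • z) '' panelOf cs δ p i = panelOf cs δ (g • p) i := by
  ext z
  simp only [panelOf, Set.mem_image, Set.mem_ofPred_eq]
  constructor
  · rintro ⟨w, hw, rfl⟩
    rwa [hact]
  · intro hz
    exact ⟨g⁻¹ • z, by rwa [← hact g, smul_inv_smul], smul_inv_smul g z⟩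

end Apartments

namespace IsWBuilding

variable {B W Ch : Type*} [Group W] {M : CoxeterMatrix B} {cs : CoxeterSystem M W}
  {δ : Ch → Ch → W} (hbld : IsWBuilding cs δ)
include hbld

theorem delta_self (c : Ch) : δ c c = 1 := (hbld.eq_one_iff c c).2 rfl

theorem delta_eq_mul {a b c : Ch} {γ : W} (hbc : δ b c = γ)
    (hlen : cs.length (δ a b * γ) = cs.length (δ a b) + cs.length γ) : δ a c = δ a b * γ := by
  induction γ using cs.induction_reduced generalizing c with
  | one => rw [(hbld.eq_one_iff b c).1 hbc, mul_one]
  | mul_simple γ i hγ ih =>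
    obtain ⟨e, hce, hbe⟩ := hbld.exists_step b c i
    rw [hbc, cs.simple_mul_simple_cancel_right] at hbe
    obtain ⟨hl₁, hl₂⟩ := cs.length_mul_of_length_mul_mul_simple hγ hlen
    have hae := ih hbe hl₁
    have hec : δ e c = cs.simple i := by rw [hbld.symm, hce, cs.inv_simple]
    rw [hbld.step_len a e c i hec (by rw [hae]; exact hl₂), hae, mul_assoc]

theorem exists_delta_eq_delta_eq {p q : Ch} {β γ : W} (hpq : δ p q = β * γ)
    (hlen : cs.length (β * γ) = cs.length β + cs.length γ) : ∃ x, δ p x = β ∧ δ x q = γ := by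
  induction γ using cs.induction_reduced generalizing q with
  | one => exact ⟨q, by rwa [mul_one] at hpq, hbld.delta_self q⟩
  | mul_simple γ i hγ ih =>
    obtain ⟨e, hqe, hpe⟩ := hbld.exists_step p q i
    rw [hpq, ← mul_assoc, cs.simple_mul_simple_cancel_right] at hpe
    obtain ⟨hl₁, -⟩ := cs.length_mul_of_length_mul_mul_simple hγ hlen
    obtain ⟨x, hpx, hxe⟩ := ih hpe hl₁
    have heq : δ e q = cs.simple i := by rw [hbld.symm, hqe, cs.inv_simple]
    exact ⟨x, hpx, by rw [hbld.delta_eq_mul heq (by rw [hxe, hγ, cs.length_simple]), hxe]⟩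

theorem eq_of_delta_eq_of_delta_eq {p q x x' : Ch} {β γ : W}
    (hlen : cs.length (β * γ) = cs.length β + cs.length γ) (hpx : δ p x = β) (hxq : δ x q = γ)
    (hpx' : δ p x' = β) (hx'q : δ x' q = γ) : x = x' := by
  induction γ using cs.induction_reduced generalizing q with
  | one => exact ((hbld.eq_one_iff x q).1 hxq).trans ((hbld.eq_one_iff x' q).1 hx'q).symm
  | mul_simple γ i hγ ih =>
    obtain ⟨hl₁, hl₂⟩ := cs.length_mul_of_length_mul_mul_simple hγ hlen
    obtain ⟨e, hqe, hxe⟩ := hbld.exists_step x q i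
    obtain ⟨e', hqe', hx'e'⟩ := hbld.exists_step x' q i
    rw [hxq, cs.simple_mul_simple_cancel_right] at hxe
    rw [hx'q, cs.simple_mul_simple_cancel_right] at hx'e'
    have hpe : δ p e = β * γ := by rw [hbld.delta_eq_mul hxe (by rwa [hpx]), hpx]
    have hpe' : δ p e' = β * γ := by rw [hbld.delta_eq_mul hx'e' (by rwa [hpx']), hpx']
    obtain rfl : e = e' := by
      rcases hbld.step e q e' i hqe' with h | h
      · rw [hbld.symm q e, hqe, cs.inv_simple, cs.simple_mul_simple_self] at h
        exact (hbld.eq_one_iff e e').1 h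
      · rw [hbld.symm q e, hqe, cs.inv_simple] at h
        have := hbld.step_len p e e' i h (by rw [hpe]; exact hl₂)
        rw [hpe, hpe', left_eq_mul] at this
        exact absurd (congrArg cs.length this) (by simp)
    exact ih hl₁ hxe hx'e'

theorem delta_eq_inv_mul_of_forall_delta_mul_simple {X : W → Ch}
    (hX : ∀ u i, δ (X u) (X (u * cs.simple i)) = cs.simple i) (u v : W) :
    δ (X u) (X v) = u⁻¹ * v := by
  obtain ⟨w, rfl⟩ : ∃ w, v = u * w := ⟨u⁻¹ * v, by group⟩
  rw [inv_mul_cancel_left]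
  induction w using cs.induction_reduced with
  | one => rw [mul_one, hbld.delta_self]
  | mul_simple w i hlen ih =>
    rw [← mul_assoc, hbld.step_len _ _ _ i (hX _ i) (by rw [ih]; exact hlen), ih]

theorem isApartmentOf_range {X : W → Ch} (hX : ∀ u v, δ (X u) (X v) = u⁻¹ * v) :
    IsApartmentOf cs δ (Set.range X) :=
  ⟨X, fun u v h => inv_mul_eq_one.1 ((hX u v).symm.trans (by rw [h, hbld.delta_self])), rfl, hX⟩

theorem oppPanelsIn_panelOf {f : W → Ch} (hf : ∀ u v, δ (f u) (f v) = u⁻¹ * v) {w₀ : W}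
    {i j : B} (hj : w₀⁻¹ * cs.simple i * w₀ = cs.simple j) (v : W) :
    OppPanelsIn cs δ w₀ (Set.range f) (panelOf cs δ (f v) i)
      (panelOf cs δ (f (v * cs.simple i * w₀)) j) :=
  ⟨⟨_, _, rfl⟩, ⟨_, _, rfl⟩, f v, ⟨Or.inl (hbld.delta_self _), v, rfl⟩, f (v * w₀),
    ⟨Or.inr (by rw [hf, ← hj, mul_inv_rev, mul_inv_rev, cs.inv_simple]; group), _, rfl⟩,
    by rw [hf]; group⟩

variable {w₀ : W} (hw₀ : ∀ w, cs.length w ≤ cs.length w₀)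
include hw₀

theorem isApartmentOf_of_delta_eq_longest {p q : Ch} (hpq : δ p q = w₀) :
    IsApartmentOf cs δ {z | δ p z * δ z q = w₀} := by
  have hlen : ∀ u, cs.length (u * (u⁻¹ * w₀)) = cs.length u + cs.length (u⁻¹ * w₀) :=
    fun u => by rw [mul_inv_cancel_left, cs.length_add_length_inv_mul_longest hw₀]
  choose X hpX hXq using fun u =>
    hbld.exists_delta_eq_delta_eq (hpq.trans (mul_inv_cancel_left u w₀).symm) (hlen u)
  have huniq : ∀ z, δ p z * δ z q = w₀ → X (δ p z) = z := fun z hz =>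
    hbld.eq_of_delta_eq_of_delta_eq (hlen _) (hpX _) (hXq _) rfl (eq_inv_mul_of_mul_eq hz)
  have hadj : ∀ u i, cs.length (u * cs.simple i) = cs.length u + 1 →
      δ (X u) (X (u * cs.simple i)) = cs.simple i := by
    intro u i hui
    obtain ⟨e, hue, hqe⟩ := hbld.exists_step q (X u) i
    have hpe : δ p e = u * cs.simple i := by
      rw [hbld.step_len p (X u) e i hue (by rwa [hpX]), hpX]
    have heq : δ e q = (u * cs.simple i)⁻¹ * w₀ := by
      rw [hbld.symm q e, hqe, hbld.symm (X u) q, hXq]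
      group
    rwa [← hpe, huniq e (by rw [hpe, heq, mul_inv_cancel_left])]
  have hadj' : ∀ u i, δ (X u) (X (u * cs.simple i)) = cs.simple i := by
    intro u i
    rcases cs.length_mul_simple u i with h | h
    · exact hadj u i h
    · have h' := hadj (u * cs.simple i) i (by rw [cs.simple_mul_simple_cancel_right]; omega)
      rw [cs.simple_mul_simple_cancel_right] at h'
      rw [hbld.symm, h', cs.inv_simple]
  have hrange : Set.range X = {z | δ p z * δ z q = w₀} := by
    ext z
    refine ⟨?_, fun hz => ⟨_, huniq z hz⟩⟩
    rintro ⟨u, rfl⟩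
    exact (congrArg₂ (· * ·) (hpX u) (hXq u)).trans (mul_inv_cancel_left u w₀)
  exact hrange ▸ hbld.isApartmentOf_range (hbld.delta_eq_inv_mul_of_forall_delta_mul_simple hadj')

theorem exists_smul_eq_of_delta_eq_simple {G : Type*} [Group G] [MulAction G Ch]
    (hact : IsIsometricAction cs δ G) (hstrong : IsStronglyTransitive cs δ G) {f : W → Ch}
    (hf : ∀ u v, δ (f u) (f v) = u⁻¹ * v) {v : W} {i : B} {y : Ch}
    (hy : δ (f v) y = cs.simple i) :
    ∃ h : G, h • y = f (v * cs.simple i) ∧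
      h • f (v * cs.simple i * w₀) = f (v * cs.simple i * w₀) ∧
      ∀ w, δ (f w) y = w⁻¹ * v * cs.simple i → h • f w = f w := by
  set y' := f (v * cs.simple i * w₀)
  have hyv : δ y (f v) = cs.simple i := by rw [hbld.symm, hy, cs.inv_simple]
  have hvy' : δ (f v) y' = cs.simple i * w₀ := by rw [hf]; group
  have hyy' : δ y y' = w₀ := by
    have := cs.length_simple_mul_longest hw₀ i
    rw [hbld.delta_eq_mul hvy'
      (by rw [hyv, cs.simple_mul_simple_cancel_left, cs.length_simple]; omega),
      hyv, cs.simple_mul_simple_cancel_left]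
  have hA := hbld.isApartmentOf_range hf
  have hfv : δ y (f v) * δ (f v) y' = w₀ := by rw [hyv, hvy', cs.simple_mul_simple_cancel_left]
  obtain ⟨h, himg, hh⟩ := hstrong _ _ (hbld.isApartmentOf_of_delta_eq_longest hw₀ hyy') hA
    (f v) hfv (f v) ⟨v, rfl⟩
  have hdist : ∀ z, δ (f v) (h • z) = δ (f v) z := fun z => by rw [← hact h (f v) z, hh]
  have hfix : ∀ z, δ y z * δ z y' = w₀ → z ∈ Set.range f → h • z = z := fun z hz hzA =>
    hA.eq_of_delta_eq ⟨v, rfl⟩ (himg ▸ Set.mem_image_of_mem _ hz) hzA (hdist z)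
  refine ⟨h, hA.eq_of_delta_eq ⟨v, rfl⟩ (himg ▸ Set.mem_image_of_mem _ ?_) ⟨_, rfl⟩ ?_,
    hfix _ ?_ ⟨_, rfl⟩, fun w hw => hfix _ ?_ ⟨w, rfl⟩⟩
  · show δ y y * δ y y' = w₀
    rw [hbld.delta_self, hyy', one_mul]
  · rw [hdist, hy, hf, inv_mul_cancel_left]
  · rw [hyy', hbld.delta_self, mul_one]
  · rw [hbld.symm (f w) y, hw, hf]
    group

end IsWBuilding

theorem stmt4_general {I W Ch G : Type*} [Group W] [Finite W] {M : CoxeterMatrix I}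
    (cs : CoxeterSystem M W) (δ : Ch → Ch → W) (hbld : IsWBuilding cs δ)
    (w₀ : W) (hw₀ : ∀ w : W, cs.length w ≤ cs.length w₀)
    [Group G] [MulAction G Ch] (hact : IsIsometricAction cs δ G)
    (hstrong : IsStronglyTransitive cs δ G)
    (A : Set Ch) (hA : IsApartmentOf cs δ A) (c : Ch) (hc : c ∈ A) :
    ∀ b : G, b • c = c →
      b ∈ Subgroup.closure
        ({g : G | ∀ x ∈ A, g • x = x} ∪
         {g : G | g • c = c ∧ ∃ P Q : Set Ch, OppPanelsIn cs δ w₀ A P Q ∧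
            (fun x => g • x) '' P = P ∧ (fun x => g • x) '' Q = Q}) := by
  obtain ⟨f, rfl, hf, rfl⟩ := hA.exists_chart hc
  intro b hb
  refine Subgroup.mem_closure_of_exists_mul_ssubset (P := fun b => b • f 1 = f 1)
    (fun b => {w | b • f w = f w})
    (fun b _ hb => Or.inl ?_) (fun b hb hne => ?_) hb
  · rintro _ ⟨w, rfl⟩
    exact Set.eq_univ_iff_forall.1 hb w
  obtain ⟨v, hv, i, hvi⟩ := cs.exists_mul_simple_not_mem (V := {w | b • f w = f w}) hb hne
  obtain ⟨h, hy, hy', hfix⟩ := hbld.exists_smul_eq_of_delta_eq_simple hw₀ hact hstrong hf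
    (y := b • f (v * cs.simple i)) (by rw [← hv, hact, hf, inv_mul_cancel_left])
  have hmono : ∀ w, b • f w = f w → (h * b) • f w = f w := fun w hw => by
    rw [mul_smul, hw, hfix w (by rw [← hw, hact, hf, mul_assoc])]
  have hhc : h • f 1 = f 1 := by simpa [mul_smul, hb] using hmono 1 hb
  have hhv : h • f v = f v := by simpa [mul_smul, show b • f v = f v from hv] using hmono v hv
  obtain ⟨j, hj⟩ := cs.exists_inv_mul_simple_mul_longest_eq hw₀ i
  refine ⟨h, Or.inr ⟨hhc, _, _, hbld.oppPanelsIn_panelOf hf hj v,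
    by rw [hact.image_panelOf, hhv], by rw [hact.image_panelOf, hy']⟩, hmono 1 hb,
    (Set.ssubset_iff_of_subset hmono).2 ⟨v * cs.simple i,
      (by rw [mul_smul, hy] : (h * b) • f (v * cs.simple i) = f (v * cs.simple i)), hvi⟩⟩

/-- generation lemma: Let `G` act strongly transitively on a thick
spherical building, `A` an apartment, `c ∈ A` a chamber, `B = Stab_G(c)`, `T` the
pointwise stabilizer of `A`, and for each pair `(P,Q)` of opposite panels of `A`, the
subgroup of `B` stabilizing both `P` and `Q`. Then `B` is generated by `T` together
with these subgroups. -/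
theorem stmt4 {I W Ch G : Type*} [Group W] [Finite W] {M : CoxeterMatrix I}
    (cs : CoxeterSystem M W) (δ : Ch → Ch → W) (hbld : IsWBuilding cs δ)
    (w₀ : W) (hw₀ : ∀ w : W, cs.length w ≤ cs.length w₀)
    (hthick : IsThick cs δ)
    [Group G] [MulAction G Ch] (hact : IsIsometricAction cs δ G)
    (hstrong : IsStronglyTransitive cs δ G)
    (A : Set Ch) (hA : IsApartmentOf cs δ A) (c : Ch) (hc : c ∈ A) :
    ∀ b : G, b • c = c →
      b ∈ Subgroup.closure
        ({g : G | ∀ x ∈ A, g • x = x} ∪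
         {g : G | g • c = c ∧ ∃ P Q : Set Ch, OppPanelsIn cs δ w₀ A P Q ∧
            (fun x => g • x) '' P = P ∧ (fun x => g • x) '' Q = Q}) :=
  stmt4_general cs δ hbld w₀ hw₀ hact hstrong A hA c hc
end

section
/- Let G act strongly transitively on a thick spherical building Δ, let Σ be an apartment, c ∈ Σ a chamber, c̄ the chamber of Σ opposite c, and b ∈ B (the stabilizer of c). Fix a minimal gallery c = c₀, c₁, …, c_m = c̄ in Σ. If i is the largest index with b(c_i) ∈ Σ and i < m, then there exists an element k ∈ B fixing both panels of the pair of opposite panels of Σ determined by c_i ∩ c_{i+1}, such that k(c_{i+1}) = b(c_{i+1}) and k(c_j) = c_j for all j ≤ i. -/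
/-!
Since `b` fixes `c` and the chambers of `A` are determined by their Weyl distance from `c`, `b`
fixes `γ i`, hence every chamber `γ j` (`j ≤ i`) lying between `c` and `γ i` on the minimal
gallery. Let `q ∈ A` be opposite `γ (i + 1)`; a single step shows that `b • γ (i + 1)` is opposite
`q` too. The chambers between two opposite chambers form an apartment `S`, which contains
`c, …, γ i`, `q` and `b • γ (i + 1)`. Strong transitivity gives `g` fixing `c` with `g • S = A`.
An isometry fixing `c` fixes every chamber of `A` that it keeps in `A`, so `k = g⁻¹` fixes
`c, …, γ i` and `q`, hence both panels, and sends `γ (i + 1)` to `b • γ (i + 1)`.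

That the chambers between opposite chambers form an apartment rests on
`ℓ w + ℓ (w⁻¹ * w₀) = ℓ w₀` in `W`, which follows from the strong exchange condition.
-/

namespace CoxeterSystem

open List

variable {B W : Type*} [Group W] {M : CoxeterMatrix B} (cs : CoxeterSystem M W)

local prefix:100 "s" => cs.simple
local prefix:100 "π" => cs.wordProd
local prefix:100 "ℓ" => cs.length
local prefix:100 "ris" => cs.rightInvSeq
local prefix:100 "lis" => cs.leftInvSeq

theorem leftInvSeq_eq_rightInvSeq_of_wordProd_eq_one {ω : List B} (h : π ω = 1) :
    lis ω = ris ω := by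
  refine List.ext_getElem (by simp) fun j hl hr => ?_
  have hlis := cs.getD_leftInvSeq_mul_wordProd ω j
  have hris := cs.wordProd_mul_getD_rightInvSeq ω j
  rw [h, mul_one, List.getD_eq_getElem _ _ hl] at hlis
  rw [h, one_mul, List.getD_eq_getElem _ _ hr] at hris
  rw [hlis, hris]

theorem prod_map_alternatingWord_two_mul {G : Type*} [Monoid G] (f : B → G) (i j : B) (m : ℕ) :
    ((alternatingWord i j (2 * m)).map f).prod = (f i * f j) ^ m := by
  induction m with
  | zero => simp [alternatingWord]
  | succ m ih =>
    rw [Nat.mul_succ, alternatingWord_succ, alternatingWord_succ]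
    simp [ih, pow_succ]

theorem wordProd_alternatingWord_two_mul_eq_one (i j : B) :
    π (alternatingWord i j (2 * M i j)) = 1 := by
  rw [wordProd, prod_map_alternatingWord_two_mul, simple_mul_simple_pow]

theorem even_count_rightInvSeq_alternatingWord [DecidableEq W] (i j : B) (t : W) :
    Even ((ris (alternatingWord i j (2 * M i j))).count t) := by
  -- The braid word has trivial product, so its two inversion sequences agree, and its left
  -- inversion sequence is periodic with period `M i j`.
  set m := M i j
  set g : ℕ → W := fun k => π alternatingWord j i (2 * k + 1)
  have hg : ∀ k, g (k + m) = g k := by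
    intro k
    simp only [g, prod_alternatingWord_eq_mul_pow]
    rw [show (2 * (k + m) + 1) / 2 = k + m by omega, show (2 * k + 1) / 2 = k by omega,
      pow_add, simple_mul_simple_pow', mul_one]
    simp
  have hseq : lis (alternatingWord i j (2 * m)) = (range m).map g ++ (range m).map g := by
    refine List.ext_getElem (by simp; omega) fun k hk _ => ?_
    rw [getElem_leftInvSeq_alternatingWord cs i j m k (by simpa using hk), getElem_append]
    split_ifs with h
    · simp [g]
    · simp only [getElem_map, getElem_range, length_map, length_range] at h ⊢
      rw [← hg, Nat.sub_add_cancel (not_lt.mp h)]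
  rw [← leftInvSeq_eq_rightInvSeq_of_wordProd_eq_one cs
    (wordProd_alternatingWord_two_mul_eq_one cs i j), hseq, count_append]
  exact ⟨_, rfl⟩

section ReflectionCocycle

variable [DecidableEq W]

-- Tits's permutation representation on `T × {±1}`, with `T ⊆ W` and `{±1}` written as `ZMod 2`.
def flipPerm (i : B) : Equiv.Perm (W × ZMod 2) :=
  Function.Involutive.toPerm (fun p => (s i * p.1 * s i, p.2 + if p.1 = s i then 1 else 0)) <| by
    rintro ⟨t, e⟩
    have hconj : s i * (s i * t * s i) * s i = t := by simp [← mul_assoc]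
    have hfix : s i * t * s i = s i ↔ t = s i := by
      constructor
      · intro h; rw [← hconj, h]; simp
      · rintro rfl; simp
    simp only [hconj, hfix, Prod.mk.injEq, true_and]
    split_ifs
    · rw [add_assoc, show (1 + 1 : ZMod 2) = 0 from rfl, add_zero]
    · simp

theorem flipPerm_apply (i : B) (t : W) (e : ZMod 2) :
    cs.flipPerm i (t, e) = (s i * t * s i, e + if t = s i then 1 else 0) := rfl

theorem prod_map_flipPerm_apply (ω : List B) (t : W) (e : ZMod 2) :
    (ω.map cs.flipPerm).prod (t, e) = (π ω * t * (π ω)⁻¹, e + (ris ω).count t) := by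
  induction ω with
  | nil => simp
  | cons i ω ih =>
    have hcond : π ω * t * (π ω)⁻¹ = s i ↔ (π ω)⁻¹ * s i * π ω = t := by
      constructor <;> intro h <;> rw [← h] <;> group
    simp only [map_cons, prod_cons, Equiv.Perm.mul_apply, ih, flipPerm_apply, rightInvSeq,
      count_cons, wordProd_cons, hcond, beq_iff_eq, mul_inv_rev, inv_simple, Prod.mk.injEq]
    refine ⟨by group, ?_⟩
    split_ifs <;> push_cast <;> ring

theorem isLiftable_flipPerm : M.IsLiftable cs.flipPerm := by
  intro i j
  rw [← prod_map_alternatingWord_two_mul]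
  ext1 ⟨t, e⟩
  obtain ⟨k, hk⟩ := even_count_rightInvSeq_alternatingWord cs i j t
  rw [prod_map_flipPerm_apply, wordProd_alternatingWord_two_mul_eq_one, hk]
  simp [← two_mul, show (2 : ZMod 2) = 0 from rfl]

def flipHom : W →* Equiv.Perm (W × ZMod 2) := cs.lift ⟨cs.flipPerm, cs.isLiftable_flipPerm⟩

theorem flipHom_wordProd_apply (ω : List B) (t : W) (e : ZMod 2) :
    cs.flipHom (π ω) (t, e) = (π ω * t * (π ω)⁻¹, e + (ris ω).count t) := by
  rw [← prod_map_flipPerm_apply, wordProd, map_list_prod, map_map]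
  congr 2
  exact map_congr_left fun i _ => cs.lift_apply_simple cs.isLiftable_flipPerm i

theorem flipHom_apply_self {t : W} (ht : cs.IsReflection t) : cs.flipHom t (t, 0) = (t, 1) := by
  obtain ⟨v, i, rfl⟩ := ht
  obtain ⟨ρ, rfl⟩ := cs.wordProd_surjective v
  have hρ (e : ZMod 2) := cs.flipHom_wordProd_apply ρ (s i) e
  have hρinv : (cs.flipHom (π ρ))⁻¹ (π ρ * s i * (π ρ)⁻¹, 0) =
      (s i, -((ris ρ).count (s i) : ZMod 2)) := by
    rw [Equiv.Perm.inv_eq_iff_eq, hρ, neg_add_cancel]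
  have hi : cs.flipHom (s i) = cs.flipPerm i := cs.lift_apply_simple cs.isLiftable_flipPerm i
  rw [map_mul, map_mul, map_inv, Equiv.Perm.mul_apply, Equiv.Perm.mul_apply, hρinv, hi,
    flipPerm_apply, if_pos rfl, simple_mul_simple_self, one_mul, hρ]
  simp only [Prod.mk.injEq, true_and]
  ring

end ReflectionCocycle

theorem mem_rightInvSeq_of_isRightInversion {ω : List B} {t : W}
    (ht : cs.IsRightInversion (π ω) t) : t ∈ ris ω := by
  classical
  obtain ⟨ω', hω', hπ'⟩ := cs.exists_isReduced (π ω * t)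
  have hnot : t ∉ ris ω' := fun h => by
    have := (cs.isRightInversion_of_mem_rightInvSeq hω' h).2
    rw [← hπ', mul_assoc, ht.1.mul_self, mul_one] at this
    exact absurd ht.2 (not_lt.mpr this.le)
  -- `π ω = π ω' * t`, and `t` does not occur in `ris ω'`, so it occurs an odd number of times
  -- in `ris ω`.
  have key : cs.flipHom (π ω) (t, 0) = cs.flipHom (π ω') (t, 1) := by
    rw [← flipHom_apply_self cs ht.1, ← Equiv.Perm.mul_apply, ← map_mul, ← hπ', mul_assoc,
      ht.1.mul_self, mul_one]
  rw [flipHom_wordProd_apply, flipHom_wordProd_apply, count_eq_zero.mpr hnot] at key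
  by_contra h
  rw [count_eq_zero.mpr h] at key
  simp at key

open scoped Classical in
theorem flipHom_apply [DecidableEq W] (w t : W) (e : ZMod 2) :
    cs.flipHom w (t, e) = (w * t * w⁻¹, e + if cs.IsRightInversion w t then 1 else 0) := by
  obtain ⟨ω, hω, rfl⟩ := cs.exists_isReduced w
  have hmem : t ∈ ris ω ↔ cs.IsRightInversion (π ω) t :=
    ⟨cs.isRightInversion_of_mem_rightInvSeq hω, cs.mem_rightInvSeq_of_isRightInversion⟩
  rw [flipHom_wordProd_apply, ← hmem]
  by_cases h : t ∈ ris ω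
  · simp [h, count_eq_one_of_mem hω.nodup_rightInvSeq h]
  · simp [h, count_eq_zero.mpr h]

theorem length_mul_add_length_of_forall_length_le {w₀ : W} (hw₀ : ∀ w, ℓ w ≤ ℓ w₀) (y : W) :
    ℓ (w₀ * y) + ℓ y = ℓ w₀ := by
  classical
  induction hn : ℓ y generalizing y with
  | zero => simp [cs.length_eq_zero_iff.mp hn]
  | succ n ih =>
    obtain ⟨i, hi⟩ := cs.exists_rightDescent_of_ne_one (w := y) (by rintro rfl; simp at hn)
    obtain ⟨y, rfl⟩ : ∃ y', y = y' * s i := ⟨y * s i, by simp⟩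
    rw [IsRightDescent, simple_mul_simple_cancel_right] at hi
    have hy : ℓ y = n := by rcases cs.length_mul_simple y i with h | h <;> omega
    have ht : cs.IsRightInversion w₀ (y * s i * y⁻¹) :=
      ⟨⟨y, i, rfl⟩, (hw₀ _).lt_of_ne (IsReflection.length_mul_left_ne ⟨y, i, rfl⟩ w₀)⟩
    have hnot : ¬ cs.IsRightInversion y⁻¹ (y * s i * y⁻¹) := by
      rintro ⟨-, h⟩
      rw [show y⁻¹ * (y * s i * y⁻¹) = (y * s i)⁻¹ by simp [mul_assoc], cs.length_inv,
        cs.length_inv] at h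
      omega
    -- `y * s i * y⁻¹` is a right inversion of `w₀` but not of `y⁻¹`; the cocycle identity for
    -- `w₀ = (w₀ * y) * y⁻¹` makes `s i` a right inversion of `w₀ * y`.
    have hcocycle : cs.flipHom w₀ (y * s i * y⁻¹, 0) =
        cs.flipHom (w₀ * y) (cs.flipHom y⁻¹ (y * s i * y⁻¹, 0)) := by
      rw [← Equiv.Perm.mul_apply, ← map_mul, mul_inv_cancel_right]
    simp only [flipHom_apply, if_pos ht, if_neg hnot, zero_add, add_zero, Prod.mk.injEq,
      show y⁻¹ * (y * s i * y⁻¹) * y⁻¹⁻¹ = s i by group] at hcocycle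
    have hdesc : cs.IsRightInversion (w₀ * y) (s i) := by
      by_contra h
      simp [h] at hcocycle
    have := ih y hy
    rw [← mul_assoc]
    rcases cs.length_mul_simple (w₀ * y) i with h | h <;> [exact absurd hdesc.2 (by omega); omega]

theorem length_add_length_inv_mul_of_forall_length_le {w₀ : W} (hw₀ : ∀ w, ℓ w ≤ ℓ w₀) (w : W) :
    ℓ w + ℓ (w⁻¹ * w₀) = ℓ w₀ := by
  have h := cs.length_mul_add_length_of_forall_length_le (w₀ := w₀⁻¹)
    (fun w => by rw [cs.length_inv]; exact hw₀ w) w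
  rw [← cs.length_inv (w₀⁻¹ * w), mul_inv_rev, inv_inv, cs.length_inv w₀] at h
  omega

end CoxeterSystem

def IsGallery {B W Ch : Type*} [Group W] {M : CoxeterMatrix B} (cs : CoxeterSystem M W)
    (δ : Ch → Ch → W) (γ : ℕ → Ch) (n : ℕ) : Prop :=
  ∀ j < n, ∃ i, δ (γ j) (γ (j + 1)) = cs.simple i

namespace IsWBuilding

variable {B W Ch : Type*} [Group W] {M : CoxeterMatrix B} {cs : CoxeterSystem M W}
  {δ : Ch → Ch → W}

local prefix:100 "s" => cs.simple
local prefix:100 "ℓ" => cs.length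

theorem delta_self_s5 (hδ : IsWBuilding cs δ) (x : Ch) : δ x x = 1 := (hδ.eq_one_iff x x).2 rfl

theorem delta_comm_of_eq_simple (hδ : IsWBuilding cs δ) {x y : Ch} {i : B} (h : δ x y = s i) :
    δ y x = s i := by
  rw [hδ.symm, h, cs.inv_simple]

theorem delta_eq_simple_mul (hδ : IsWBuilding cs δ) {x y z : Ch} {i : B} {v : W}
    (hxy : δ x y = s i) (hyz : δ y z = v) (hv : ℓ (s i * v) = ℓ v + 1) : δ x z = s i * v := by
  have hzy : δ z y = v⁻¹ := by rw [hδ.symm, hyz]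
  have hzx := hδ.step_len z y x i (hδ.delta_comm_of_eq_simple hxy)
    (by rw [hzy, ← cs.length_inv, mul_inv_rev, inv_inv, cs.inv_simple, hv, cs.length_inv])
  rw [hδ.symm, hzx, hzy, mul_inv_rev, inv_inv, cs.inv_simple]

theorem delta_eq_of_delta_eq_simple_mul {w₀ : W} (hδ : IsWBuilding cs δ)
    (hw₀ : ∀ w, ℓ w ≤ ℓ w₀) {x y z : Ch} {i : B} (hxy : δ x y = s i) (hyz : δ y z = s i * w₀) :
    δ x z = w₀ := by
  have hw₀i := hw₀ (s i * w₀)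
  have h := hδ.delta_eq_simple_mul hxy hyz (by
    rw [cs.simple_mul_simple_cancel_left]
    rcases cs.length_simple_mul w₀ i with h | h <;> omega)
  rwa [cs.simple_mul_simple_cancel_left] at h

theorem length_delta_le_of_isGallery (hδ : IsWBuilding cs δ) {γ : ℕ → Ch} {n : ℕ}
    (hγ : IsGallery cs δ γ n) {j k : ℕ} (hjk : j ≤ k) (hkn : k ≤ n) :
    ℓ (δ (γ j) (γ k)) ≤ k - j := by
  induction k, hjk using Nat.le_induction with
  | base => simp [hδ.delta_self_s5]
  | succ k hjk ih =>
    obtain ⟨i, hi⟩ := hγ k (by omega)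
    have := ih (by omega)
    rcases hδ.step (γ j) (γ k) (γ (k + 1)) i hi with h | h <;> rw [h]
    · have := cs.length_mul_le (δ (γ j) (γ k)) (s i)
      rw [cs.length_simple] at this
      omega
    · omega

theorem exists_delta_eq_and_delta_eq (hδ : IsWBuilding cs δ) {u v : W}
    (huv : ℓ (u * v) = ℓ u + ℓ v) {x y : Ch} (hxy : δ x y = u * v) :
    ∃ z, δ x z = u ∧ δ z y = v := by
  induction hn : ℓ u generalizing u v y with
  | zero =>
    obtain rfl := cs.length_eq_zero_iff.mp hn
    exact ⟨x, hδ.delta_self_s5 x, by rw [hxy, one_mul]⟩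
  | succ n ih =>
    obtain ⟨i, hi⟩ := cs.exists_rightDescent_of_ne_one (w := u) (by rintro rfl; simp at hn)
    obtain ⟨u, rfl⟩ : ∃ u', u = u' * s i := ⟨u * s i, by simp⟩
    rw [CoxeterSystem.IsRightDescent, cs.simple_mul_simple_cancel_right] at hi
    have hu : ℓ (u * s i) = ℓ u + 1 := by
      rcases cs.length_mul_simple u i with h | h <;> omega
    have hsv : ℓ (u * (s i * v)) = ℓ u + ℓ (s i * v) := by
      have h1 := cs.length_mul_le u (s i * v)
      have h2 := cs.length_mul_le (s i) v
      rw [← mul_assoc] at h1 ⊢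
      rw [cs.length_simple] at h2
      omega
    obtain ⟨z, hxz, hzy⟩ := ih hsv (by rw [hxy, mul_assoc]) (by omega)
    obtain ⟨e, hze, hye⟩ := hδ.exists_step y z i
    refine ⟨e, by rw [hδ.step_len x z e i hze (by rw [hxz]; exact hu), hxz], ?_⟩
    rw [hδ.symm, hye, hδ.symm, hzy]
    group

theorem eq_of_delta_eq_simple (hδ : IsWBuilding cs δ) {x y z z' : Ch} {u : W} {i : B}
    (hu : ℓ (u * s i) = ℓ u + 1) (hz : δ x z = u) (hz' : δ x z' = u) (hzy : δ z y = s i)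
    (hz'y : δ z' y = s i) : z = z' := by
  rcases hδ.step z y z' i (hδ.delta_comm_of_eq_simple hz'y) with h | h
  · rw [hzy, cs.simple_mul_simple_self] at h
    exact (hδ.eq_one_iff z z').1 h
  · have := hδ.step_len x z z' i (by rw [← hzy, ← h]) (by rw [hz]; exact hu)
    rw [hz', hz] at this
    have := congrArg cs.length this
    omega

theorem eq_of_delta_eq_of_delta_eq_s5 (hδ : IsWBuilding cs δ) {u v : W}
    (huv : ℓ (u * v) = ℓ u + ℓ v) {x y z z' : Ch} (hz : δ x z = u) (hzy : δ z y = v)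
    (hz' : δ x z' = u) (hz'y : δ z' y = v) : z = z' := by
  induction hn : ℓ v generalizing u v z z' with
  | zero =>
    obtain rfl := cs.length_eq_zero_iff.mp hn
    rw [(hδ.eq_one_iff z y).1 hzy, (hδ.eq_one_iff z' y).1 hz'y]
  | succ n ih =>
    obtain ⟨i, hi⟩ := cs.exists_leftDescent_of_ne_one (w := v) (by rintro rfl; simp at hn)
    obtain ⟨v, rfl⟩ : ∃ v', v = s i * v' := ⟨s i * v, by simp⟩
    rw [CoxeterSystem.IsLeftDescent, cs.simple_mul_simple_cancel_left] at hi
    have hv : ℓ (s i * v) = ℓ (s i) + ℓ v := by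
      rw [cs.length_simple]; rcases cs.length_simple_mul v i with h | h <;> omega
    have hu : ℓ (u * s i) = ℓ u + 1 := by
      have h1 := cs.length_mul_le u (s i)
      have h2 := cs.length_mul_le (u * s i) v
      rw [cs.length_simple] at h1 hv
      rw [mul_assoc] at h2
      omega
    have huv' : ℓ (u * s i * v) = ℓ (u * s i) + ℓ v := by
      rw [mul_assoc, huv, hv, hu, cs.length_simple]; omega
    obtain ⟨z₁, hzz₁, hz₁y⟩ := hδ.exists_delta_eq_and_delta_eq hv hzy
    obtain ⟨z₁', hz'z₁', hz₁'y⟩ := hδ.exists_delta_eq_and_delta_eq hv hz'y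
    have hxz₁ := hδ.step_len x z z₁ i hzz₁ (by rw [hz]; exact hu)
    have hxz₁' := hδ.step_len x z' z₁' i hz'z₁' (by rw [hz']; exact hu)
    rw [hz] at hxz₁
    rw [hz'] at hxz₁'
    obtain rfl := ih huv' hxz₁ hz₁y hxz₁' hz₁'y (by rw [hv, cs.length_simple] at hn; omega)
    exact hδ.eq_of_delta_eq_simple hu hz hz' hzz₁ hz'z₁'

theorem delta_eq_of_forall_delta_mul_simple (hδ : IsWBuilding cs δ) {F : W → Ch}
    (hF : ∀ v i, δ (F v) (F (v * s i)) = s i) (u v : W) : δ (F u) (F v) = u⁻¹ * v := by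
  induction hn : ℓ (u⁻¹ * v) generalizing v with
  | zero => rw [inv_mul_eq_one.mp (cs.length_eq_zero_iff.mp hn), hδ.delta_self_s5, inv_mul_cancel]
  | succ n ih =>
    obtain ⟨i, hi⟩ := cs.exists_rightDescent_of_ne_one (w := u⁻¹ * v) (by intro h; simp [h] at hn)
    obtain ⟨v, rfl⟩ : ∃ v', v = v' * s i := ⟨v * s i, by simp⟩
    rw [CoxeterSystem.IsRightDescent, ← mul_assoc, cs.simple_mul_simple_cancel_right] at hi
    rw [← mul_assoc] at hn ⊢
    have hn' : ℓ (u⁻¹ * v) = n := by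
      rcases cs.length_mul_simple (u⁻¹ * v) i with h | h <;> omega
    rw [hδ.step_len (F u) (F v) (F (v * s i)) i (hF v i) (by rw [ih v hn']; omega), ih v hn']

theorem exists_isApartmentOf_of_delta_eq (hδ : IsWBuilding cs δ) {w₀ : W}
    (hw₀ : ∀ w, ℓ w ≤ ℓ w₀) {x y : Ch} (hxy : δ x y = w₀) :
    ∃ S, IsApartmentOf cs δ S ∧ ∀ z, δ x z * δ z y = w₀ → z ∈ S := by
  have hlen (w : W) : ℓ (w * (w⁻¹ * w₀)) = ℓ w + ℓ (w⁻¹ * w₀) := by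
    rw [mul_inv_cancel_left, cs.length_add_length_inv_mul_of_forall_length_le hw₀]
  choose F hxF hFy using fun w => hδ.exists_delta_eq_and_delta_eq (hlen w)
    (by rw [hxy, mul_inv_cancel_left] : δ x y = w * (w⁻¹ * w₀))
  have hF {z : Ch} {w : W} (hxz : δ x z = w) (hzy : δ z y = w⁻¹ * w₀) : z = F w :=
    hδ.eq_of_delta_eq_of_delta_eq_s5 (hlen w) hxz hzy (hxF w) (hFy w)
  have hadj (v : W) (i : B) : δ (F v) (F (v * s i)) = s i := by
    wlog hvi : ℓ (v * s i) = ℓ v + 1 generalizing v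
    · have h := this (v * s i) (by
        rw [cs.simple_mul_simple_cancel_right]
        rcases cs.length_mul_simple v i with h | h <;> omega)
      rw [cs.simple_mul_simple_cancel_right] at h
      exact hδ.delta_comm_of_eq_simple h
    obtain ⟨e, hFe, hye⟩ := hδ.exists_step y (F v) i
    have hxe := hδ.step_len x (F v) e i hFe (by rw [hxF]; exact hvi)
    rw [hxF] at hxe
    have hey : δ e y = (v * s i)⁻¹ * w₀ := by
      rw [hδ.symm, hye, hδ.symm, hFy]
      simp [mul_assoc]
    rw [← hF hxe hey]
    exact hFe
  refine ⟨Set.range F, ⟨F, fun a b h => ?_, rfl, hδ.delta_eq_of_forall_delta_mul_simple hadj⟩,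
    fun z hz => ⟨δ x z, (hF rfl ?_).symm⟩⟩
  · rw [← hxF a, h, hxF]
  · rw [← hz, inv_mul_cancel_left]

end IsWBuilding

namespace IsApartmentOf

variable {B W Ch : Type*} [Group W] {M : CoxeterMatrix B} {cs : CoxeterSystem M W}
  {δ : Ch → Ch → W} {A : Set Ch}

theorem delta_mul_delta (hA : IsApartmentOf cs δ A) {x y z : Ch} (hx : x ∈ A) (hy : y ∈ A)
    (hz : z ∈ A) : δ x y * δ y z = δ x z := by
  obtain ⟨f, -, rfl, hf⟩ := hA
  obtain ⟨⟨a, rfl⟩, ⟨b, rfl⟩, ⟨c, rfl⟩⟩ := And.intro hx (And.intro hy hz)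
  rw [hf, hf, hf]
  group

theorem eq_of_delta_eq_s5 (hA : IsApartmentOf cs δ A) {x y z : Ch} (hx : x ∈ A) (hy : y ∈ A)
    (hz : z ∈ A) (h : δ x y = δ x z) : y = z := by
  obtain ⟨f, -, rfl, hf⟩ := hA
  obtain ⟨⟨a, rfl⟩, ⟨b, rfl⟩, ⟨c, rfl⟩⟩ := And.intro hx (And.intro hy hz)
  rw [hf, hf, mul_right_inj] at h
  rw [h]

theorem exists_mem_delta_eq (hA : IsApartmentOf cs δ A) {x : Ch} (hx : x ∈ A) (w : W) :
    ∃ y ∈ A, δ x y = w := by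
  obtain ⟨f, -, rfl, hf⟩ := hA
  obtain ⟨a, rfl⟩ := hx
  exact ⟨f (a * w), ⟨_, rfl⟩, by rw [hf, inv_mul_cancel_left]⟩

theorem exists_isGallery (hA : IsApartmentOf cs δ A) {x y : Ch} (hx : x ∈ A) (hy : y ∈ A) :
    ∃ γ : ℕ → Ch, γ 0 = x ∧ γ (cs.length (δ x y)) = y ∧
      IsGallery cs δ γ (cs.length (δ x y)) ∧ ∀ j, γ j ∈ A := by
  obtain ⟨f, -, rfl, hf⟩ := hA
  obtain ⟨⟨a, rfl⟩, ⟨b, rfl⟩⟩ := And.intro hx hy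
  obtain ⟨ω, hω, hπ⟩ := cs.exists_isReduced (a⁻¹ * b)
  rw [hf, hπ, hω.eq]
  refine ⟨fun j => f (a * cs.wordProd (ω.take j)), by simp, by simp [← hπ],
    fun j hj => ⟨ω[j], ?_⟩, fun j => ⟨_, rfl⟩⟩
  rw [hf, List.take_add_one, List.getElem?_eq_getElem hj, Option.toList_some, cs.wordProd_append,
    cs.wordProd_singleton]
  group

theorem length_delta_eq_of_minimal (hA : IsApartmentOf cs δ A) (hδ : IsWBuilding cs δ)
    {γ : ℕ → Ch} {n : ℕ} (hγ : IsGallery cs δ γ n) (hγA : ∀ j ≤ n, γ j ∈ A)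
    (hmin : ∀ (k : ℕ) (γ' : ℕ → Ch), γ' 0 = γ 0 → γ' k = γ n → IsGallery cs δ γ' k →
      (∀ j ≤ k, γ' j ∈ A) → n ≤ k)
    {j k : ℕ} (hjk : j ≤ k) (hkn : k ≤ n) : cs.length (δ (γ j) (γ k)) = k - j := by
  have hn : n ≤ cs.length (δ (γ 0) (γ n)) := by
    obtain ⟨γ', h0, hend, hγ', hγ'A⟩ := hA.exists_isGallery (hγA 0 n.zero_le) (hγA n le_rfl)
    exact hmin _ γ' h0 hend hγ' fun j _ => hγ'A j
  have h₁ := hδ.length_delta_le_of_isGallery hγ j.zero_le (hjk.trans hkn)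
  have h₂ := hδ.length_delta_le_of_isGallery hγ hjk hkn
  have h₃ := hδ.length_delta_le_of_isGallery hγ hkn le_rfl
  have hmul := cs.length_mul_le (δ (γ 0) (γ j) * δ (γ j) (γ k)) (δ (γ k) (γ n))
  have hmul' := cs.length_mul_le (δ (γ 0) (γ j)) (δ (γ j) (γ k))
  rw [hA.delta_mul_delta (hγA 0 n.zero_le) (hγA j (by omega)) (hγA k hkn)] at hmul hmul'
  rw [hA.delta_mul_delta (hγA 0 n.zero_le) (hγA k hkn) (hγA n le_rfl)] at hmul
  omega

theorem smul_eq_of_delta_eq {G : Type*} [Group G] [MulAction G Ch] (hA : IsApartmentOf cs δ A)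
    (hact : IsIsometricAction cs δ G) {g : G} {c z z' : Ch} (hc : c ∈ A) (hg : g • c = c)
    (hgz : g • z ∈ A) (hz' : z' ∈ A) (h : δ c z = δ c z') : g • z = z' :=
  hA.eq_of_delta_eq_s5 hc hgz hz' (by rw [← h, ← hact g c z, hg])

end IsApartmentOf

namespace IsIsometricAction

variable {B W Ch G : Type*} [Group W] {M : CoxeterMatrix B} {cs : CoxeterSystem M W}
  {δ : Ch → Ch → W} [Group G] [MulAction G Ch]

theorem delta_smul_of_smul_eq (hact : IsIsometricAction cs δ G) {g : G} {x : Ch}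
    (hg : g • x = x) (z : Ch) : δ x (g • z) = δ x z := by
  rw [← hact g x z, hg]

theorem image_smul_panelOf (hact : IsIsometricAction cs δ G) (g : G) (x : Ch) (i : B) :
    (fun y => g • y) '' panelOf cs δ x i = panelOf cs δ (g • x) i := by
  ext y
  rw [Set.image_smul, Set.mem_smul_set_iff_inv_smul_mem]
  simp only [panelOf, Set.mem_ofPred_eq]
  rw [← hact g, smul_inv_smul]

theorem smul_eq_self_of_between (hact : IsIsometricAction cs δ G) (hδ : IsWBuilding cs δ)
    {g : G} {x y z : Ch} (hx : g • x = x) (hy : g • y = y) (hxzy : δ x z * δ z y = δ x y)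
    (hl : cs.length (δ x y) = cs.length (δ x z) + cs.length (δ z y)) : g • z = z :=
  hδ.eq_of_delta_eq_of_delta_eq_s5 (by rw [hxzy, hl]) (hact.delta_smul_of_smul_eq hx z)
    (by rw [← hact g z y, hy]) rfl rfl

end IsIsometricAction

theorem stmt5_general {I W Ch G : Type*} [Group W] {M : CoxeterMatrix I}
    (cs : CoxeterSystem M W) (δ : Ch → Ch → W) (hbld : IsWBuilding cs δ)
    (w₀ : W) (hw₀ : ∀ w : W, cs.length w ≤ cs.length w₀)
    [Group G] [MulAction G Ch] (hact : IsIsometricAction cs δ G)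
    (hstrong : IsStronglyTransitive cs δ G)
    (A : Set Ch) (hA : IsApartmentOf cs δ A) (c : Ch) (hc : c ∈ A)
    (n : ℕ) (γ : ℕ → Ch) (hγ0 : γ 0 = c)
    (hgal : ∀ j < n, ∃ i : I, δ (γ j) (γ (j + 1)) = cs.simple i)
    (hγA : ∀ j ≤ n, γ j ∈ A)
    (hmin : ∀ (k : ℕ) (γ' : ℕ → Ch), γ' 0 = c → γ' k = γ n →
      (∀ j < k, ∃ i : I, δ (γ' j) (γ' (j + 1)) = cs.simple i) →
      (∀ j ≤ k, γ' j ∈ A) → n ≤ k)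
    (b : G) (hb : b • c = c)
    (i : ℕ) (hin : i < n) (hbi : b • γ i ∈ A) :
    ∀ i₀ : I, δ (γ i) (γ (i + 1)) = cs.simple i₀ →
      ∃ k : G, k • c = c ∧
        (fun x => k • x) '' panelOf cs δ (γ i) i₀ = panelOf cs δ (γ i) i₀ ∧
        (∃ Q : Set Ch, OppPanelsIn cs δ w₀ A (panelOf cs δ (γ i) i₀) Q ∧
          (fun x => k • x) '' Q = Q) ∧
        k • γ (i + 1) = b • γ (i + 1) ∧
        ∀ j ≤ i, k • γ j = γ j := by
  intro i₀ hi₀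
  subst hγ0
  have hlen {j k : ℕ} (hjk : j ≤ k) (hkn : k ≤ n) :=
    hA.length_delta_eq_of_minimal hbld hgal hγA hmin hjk hkn
  have hbγi : b • γ i = γ i := hA.smul_eq_of_delta_eq hact hc hb hbi (hγA i hin.le) rfl
  have hbγ (j : ℕ) (hj : j ≤ i) : b • γ j = γ j :=
    hact.smul_eq_self_of_between hbld hb hbγi
      (hA.delta_mul_delta hc (hγA j (by omega)) (hγA i hin.le))
      (by rw [hlen i.zero_le hin.le, hlen j.zero_le (by omega), hlen hj hin.le]; omega)
  obtain ⟨q, hqA, hq⟩ := hA.exists_mem_delta_eq (hγA (i + 1) hin) w₀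
  have hc'q : δ (b • γ (i + 1)) q = w₀ := hbld.delta_eq_of_delta_eq_simple_mul hw₀ (y := γ i)
    (by rw [← hbγi, hact]; exact hbld.delta_comm_of_eq_simple hi₀)
    (by rw [← hA.delta_mul_delta (hγA i hin.le) (hγA (i + 1) hin) hqA, hi₀, hq])
  obtain ⟨S, hS, hmemS⟩ := hbld.exists_isApartmentOf_of_delta_eq hw₀ hc'q
  have hγS (j : ℕ) (hj : j ≤ i) : γ j ∈ S := hmemS _ <| by
    rw [← hbγ j hj, hact, hbγ j hj, hA.delta_mul_delta (hγA (i + 1) hin) (hγA j (by omega)) hqA, hq]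
  have hqS : q ∈ S := hmemS q (by rw [hbld.delta_self_s5, mul_one, hc'q])
  have hc'S : b • γ (i + 1) ∈ S := hmemS _ (by rw [hbld.delta_self_s5, one_mul, hc'q])
  obtain ⟨g, hgSA, hg⟩ := hstrong S A hS hA _ (hγS 0 i.zero_le) _ hc
  have hgA (z : Ch) (hz : z ∈ S) : g • z ∈ A := hgSA ▸ ⟨z, hz, rfl⟩
  have hfix (z : Ch) (hz : z ∈ S) (hzA : z ∈ A) : g⁻¹ • z = z :=
    inv_smul_eq_iff.2 (hA.smul_eq_of_delta_eq hact hc hg (hgA z hz) hzA rfl).symm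
  refine ⟨g⁻¹, inv_smul_eq_iff.2 hg.symm, ?_, ⟨panelOf cs δ q i₀, ⟨⟨_, _, rfl⟩, ⟨_, _, rfl⟩,
    γ (i + 1), ⟨Or.inr hi₀, hγA _ hin⟩, q, ⟨Or.inl (hbld.delta_self_s5 q), hqA⟩, hq⟩, ?_⟩,
    inv_smul_eq_iff.2 (hA.smul_eq_of_delta_eq hact hc hg (hgA _ hc'S) (hγA _ hin)
      (hact.delta_smul_of_smul_eq hb _)).symm,
    fun j hj => hfix _ (hγS j hj) (hγA j (by omega))⟩
  · rw [hact.image_smul_panelOf, hfix _ (hγS i le_rfl) (hγA i hin.le)]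
  · rw [hact.image_smul_panelOf, hfix q hqS hqA]

/-- With `G` strongly transitive on a thick spherical building, `A` an
apartment, `c ∈ A`, `b ∈ B = Stab_G(c)`, and `c = γ 0, …, γ n = c̄` a minimal gallery in
`A` to the opposite chamber `c̄`: if `i < n` is the largest index with `b • γ i ∈ A`,
then there is `k ∈ B` stabilizing both panels of the pair of opposite panels of `A`
determined by `γ i ∩ γ (i+1)`, with `k • γ (i+1) = b • γ (i+1)` and `k • γ j = γ j`
for all `j ≤ i`. -/
theorem stmt5 {I W Ch G : Type*} [Group W] [Finite W] {M : CoxeterMatrix I}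
    (cs : CoxeterSystem M W) (δ : Ch → Ch → W) (hbld : IsWBuilding cs δ)
    (w₀ : W) (hw₀ : ∀ w : W, cs.length w ≤ cs.length w₀)
    (hthick : IsThick cs δ)
    [Group G] [MulAction G Ch] (hact : IsIsometricAction cs δ G)
    (hstrong : IsStronglyTransitive cs δ G)
    (A : Set Ch) (hA : IsApartmentOf cs δ A) (c : Ch) (hc : c ∈ A)
    (n : ℕ) (γ : ℕ → Ch) (hγ0 : γ 0 = c)
    (hgal : ∀ j < n, ∃ i : I, δ (γ j) (γ (j + 1)) = cs.simple i)
    (hγA : ∀ j ≤ n, γ j ∈ A)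
    (hopp : δ c (γ n) = w₀)
    (hmin : ∀ (k : ℕ) (γ' : ℕ → Ch), γ' 0 = c → γ' k = γ n →
      (∀ j < k, ∃ i : I, δ (γ' j) (γ' (j + 1)) = cs.simple i) →
      (∀ j ≤ k, γ' j ∈ A) → n ≤ k)
    (b : G) (hb : b • c = c)
    (i : ℕ) (hin : i < n) (hbi : b • γ i ∈ A)
    (himax : ∀ j ≤ n, b • γ j ∈ A → j ≤ i) :
    ∀ i₀ : I, δ (γ i) (γ (i + 1)) = cs.simple i₀ →
      ∃ k : G, k • c = c ∧
        (fun x => k • x) '' panelOf cs δ (γ i) i₀ = panelOf cs δ (γ i) i₀ ∧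
        (∃ Q : Set Ch, OppPanelsIn cs δ w₀ A (panelOf cs δ (γ i) i₀) Q ∧
          (fun x => k • x) '' Q = Q) ∧
        k • γ (i + 1) = b • γ (i + 1) ∧
        ∀ j ≤ i, k • γ j = γ j :=
  stmt5_general cs δ hbld w₀ hw₀ hact hstrong A hA c hc n γ hγ0 hgal hγA hmin b hb i hin hbi
end

section
/- Let G be a group acting on a set of 'apartments' and 'chambers' of a spherical building Δ. If G acts transitively on the set of chambers of Δ and for some (equivalently, every) chamber c the stabilizer B = Stab_G(c) acts transitively on the set of chambers opposite c, then G acts strongly transitively on Δ: G is transitive on the set of apartments, and the setwise stabilizer of any apartment acts transitively on the chambers it contains. -/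
lemma apt_smul_aux {I W Ch G : Type*} [Group W] {M : CoxeterMatrix I}
    (cs : CoxeterSystem M W) (δ : Ch → Ch → W)
    [Group G] [MulAction G Ch] (hact : IsIsometricAction cs δ G)
    (g : G) {A : Set Ch} (hA : IsApartmentOf cs δ A) :
    IsApartmentOf cs δ ((fun x => g • x) '' A) := by
  obtain ⟨f, hinj, hrange, hδ⟩ := hA
  refine ⟨fun w => g • f w, fun a b h => hinj (MulAction.injective g h), ?_, fun u v => by
    rw [hact]; exact hδ u v⟩
  rw [← hrange]
  ext x
  simp [Set.range]

lemma apt_nonempty_aux {I W Ch : Type*} [Group W] {M : CoxeterMatrix I}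
    (cs : CoxeterSystem M W) (δ : Ch → Ch → W)
    {A : Set Ch} (hA : IsApartmentOf cs δ A) : ∃ c, c ∈ A := by
  obtain ⟨f, _, hrange, _⟩ := hA
  exact ⟨f 1, hrange ▸ ⟨1, rfl⟩⟩

/-- If `G` acts (type-preservingly) on a thick spherical building,
transitively on chambers, and the stabilizer of every chamber `c` is transitive on the
chambers opposite `c`, then (granting the standard facts that every pair of opposite
chambers lies in a unique apartment and every apartment contains a pair of opposite
chambers) `G` acts strongly transitively: it is transitive on apartments and the
setwise stabilizer of any apartment is transitive on its chambers. -/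
theorem stmt8 {I W Ch G : Type*} [Group W] [Finite W] {M : CoxeterMatrix I}
    (cs : CoxeterSystem M W) (δ : Ch → Ch → W) (hbld : IsWBuilding cs δ)
    (w₀ : W) (hw₀ : ∀ w : W, cs.length w ≤ cs.length w₀)
    (hthick : IsThick cs δ)
    [Group G] [MulAction G Ch] (hact : IsIsometricAction cs δ G)
    (hpair : ∀ c d : Ch, δ c d = w₀ →
      ∃! A : Set Ch, IsApartmentOf cs δ A ∧ c ∈ A ∧ d ∈ A)
    (happair : ∀ A : Set Ch, IsApartmentOf cs δ A →
      ∀ c ∈ A, ∃ d ∈ A, δ c d = w₀)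
    (htrans : ∀ c d : Ch, ∃ g : G, g • c = d)
    (hopptrans : ∀ c d e : Ch, δ c d = w₀ → δ c e = w₀ →
      ∃ g : G, g • c = c ∧ g • d = e) :
    (∀ A A' : Set Ch, IsApartmentOf cs δ A → IsApartmentOf cs δ A' →
      ∃ g : G, (fun x => g • x) '' A = A') ∧
    (∀ A : Set Ch, IsApartmentOf cs δ A → ∀ c ∈ A, ∀ d ∈ A,
      ∃ g : G, (fun x => g • x) '' A = A ∧ g • c = d) := by
  have key : ∀ A A' : Set Ch, IsApartmentOf cs δ A → IsApartmentOf cs δ A' →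
      ∀ c ∈ A, ∀ c' ∈ A', ∃ g : G, (fun x => g • x) '' A = A' ∧ g • c = c' := by
    intro A A' hA hA' c hc c' hc'
    obtain ⟨d, hd, hcd⟩ := happair A hA c hc
    obtain ⟨d', hd', hcd'⟩ := happair A' hA' c' hc'
    obtain ⟨g₁, hg₁⟩ := htrans c c'
    have h1 : δ c' (g₁ • d) = w₀ := by rw [← hg₁, hact]; exact hcd
    obtain ⟨g₂, hg₂c, hg₂d⟩ := hopptrans c' (g₁ • d) d' h1 hcd'
    refine ⟨g₂ * g₁, ?_, by rw [mul_smul, hg₁, hg₂c]⟩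
    have hgc : (g₂ * g₁) • c = c' := by rw [mul_smul, hg₁, hg₂c]
    have hgd : (g₂ * g₁) • d = d' := by rw [mul_smul, hg₂d]
    obtain ⟨B, _, hBuniq⟩ := hpair c' d' hcd'
    have h2 : IsApartmentOf cs δ ((fun x => (g₂ * g₁) • x) '' A) :=
      apt_smul_aux cs δ hact _ hA
    have e1 : (fun x => (g₂ * g₁) • x) '' A = B :=
      hBuniq _ ⟨h2, ⟨c, hc, hgc⟩, ⟨d, hd, hgd⟩⟩
    have e2 : A' = B := hBuniq _ ⟨hA', hc', hd'⟩
    rw [e1, e2]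
  constructor
  · intro A A' hA hA'
    obtain ⟨c, hc⟩ := apt_nonempty_aux cs δ hA
    obtain ⟨c', hc'⟩ := apt_nonempty_aux cs δ hA'
    obtain ⟨g, hg, _⟩ := key A A' hA hA' c hc c' hc'
    exact ⟨g, hg⟩
  · intro A hA c hc d hd
    exact key A A hA hA c hc d hd
end
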